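/- Let (S, μ) be a probability space of states, let A be a nonempty finite type of actions, and let r : S × A → ℝ be a bounded measurable reward. Let E₁ and E₂ be real finite-dimensional normed vector spaces of parameters. Let πh : E₁ → S → ℝ → ℝ be a higher-level policy density such that for every θ ∈ E₁ the map (s,k) ↦ πh θ s k is measurable on S × [0,1], πh θ s k > 0 for all (s,k) ∈ S × [0,1], and ∫_{k∈[0,1]} πh θ s k dk = 1 for every s. Let πl : E₂ → S → ℝ → A → ℝ be a lower-level policy with πl θ₂ s k a ≥ 0 and ∑_{a∈A} πl θ₂ s k a = 1 for all (s,k). Define rh(θ₂, s, k) = ∑_{a∈A} πl θ₂ s k a * r(s,a) and J(θ₁, θ₂) = ∫_S ∫_{k∈[0,1]} πh θ₁ s k * rh(θ₂,s,k) dk dμ(s). Fix θ₂ and a point θ₁ ∈ E₁, and assume: (i) the map (s,k) ↦ πh θ₁ s k * rh(θ₂,s,k) is integrable with respect to μ ⊗ (Lebesgue restricted to [0,1]); (ii) there exist ε > 0 and a function g : S × ℝ → ℝ integrable with respect to μ ⊗ (Lebesgue restricted to [0,1]) such that for (μ ⊗ Lebesgue)-a.e. (s,k) ∈ S × [0,1]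 and every θ in the open ball of radius ε around θ₁, the map θ ↦ πh θ s k has a Fréchet derivative at θ whose operator norm times |rh(θ₂,s,k)| is at most g(s,k), and θ ↦ πh θ s k * rh(θ₂,s,k) is continuous on that ball. Then θ ↦ J(θ, θ₂) is Fréchet differentiable at θ₁ and its derivative equals the Bochner integral ∫_S ∫_{k∈[0,1]} (πh θ₁ s k * rh(θ₂,s,k)) • D_θ[log (πh θ s k)]|_{θ=θ₁} dk dμ(s), an equality of continuous linear maps E₁ → ℝ. (This is the first equality of Proposition 1: ∇_{θ₁}J = E_{s∼μ, k∼πh(·|s)}[∇_{θ₁} log πh(k|s) · E_{a∼πl(·|s,k)}[r(s,a)]].) -/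

import Mathlib

open scoped BigOperators
open MeasureTheory

/-- Proposition 1, higher-level part (hierarchical policy gradient): with
`rh(θ₂,s,k) = ∑ a, pl θ₂ s k a * r (s,a)` and
`J(θ₁,θ₂) = ∫_S ∫_{k ∈ [0,1]} ph θ₁ s k * rh(θ₂,s,k) dk dμ(s)`, under the stated
integrability and dominated-derivative hypotheses, `θ ↦ J(θ, θ₂)` is Fréchet
differentiable at `θ₁` with derivative the Bochner integral
`∫_S ∫_{k ∈ [0,1]} (ph θ₁ s k * rh(θ₂,s,k)) • D_θ[log (ph θ s k)]|_{θ₁} dk dμ(s)`. -/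
theorem hierarchical_policy_gradient_higher
    {S : Type*} [MeasurableSpace S] (μ : Measure S) [IsProbabilityMeasure μ]
    {A : Type*} [Fintype A] [Nonempty A] [MeasurableSpace A]
    {E₁ E₂ : Type*}
    [NormedAddCommGroup E₁] [NormedSpace ℝ E₁] [FiniteDimensional ℝ E₁]
    [NormedAddCommGroup E₂] [NormedSpace ℝ E₂] [FiniteDimensional ℝ E₂]
    (r : S × A → ℝ)
    (hr_meas : Measurable r)
    (hr_bdd : ∃ C : ℝ, ∀ q : S × A, |r q| ≤ C)
    (ph : E₁ → S → ℝ → ℝ) (pl : E₂ → S → ℝ → A → ℝ)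
    (hph_meas : ∀ θ : E₁,
      AEStronglyMeasurable (fun q : S × ℝ => ph θ q.1 q.2)
        (μ.prod (volume.restrict (Set.Icc (0 : ℝ) 1))))
    (hph_pos : ∀ (θ : E₁) (s : S), ∀ k ∈ Set.Icc (0 : ℝ) 1, 0 < ph θ s k)
    (hph_int : ∀ (θ : E₁) (s : S), ∫ k in Set.Icc (0 : ℝ) 1, ph θ s k = 1)
    (hpl_nonneg : ∀ (θ : E₂) (s : S), ∀ k ∈ Set.Icc (0 : ℝ) 1, ∀ a, 0 ≤ pl θ s k a)
    (hpl_sum : ∀ (θ : E₂) (s : S), ∀ k ∈ Set.Icc (0 : ℝ) 1, ∑ a, pl θ s k a = 1)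
    (θ₂ : E₂) (θ₁ : E₁)
    -- (i) integrability of the integrand at (θ₁, θ₂)
    (hint : Integrable
      (fun q : S × ℝ => ph θ₁ q.1 q.2 * ∑ a, pl θ₂ q.1 q.2 a * r (q.1, a))
      (μ.prod (volume.restrict (Set.Icc (0 : ℝ) 1))))
    -- (ii) dominated-derivative hypothesis on a ball around θ₁
    (hdom : ∃ ε > (0 : ℝ), ∃ g : S × ℝ → ℝ,
      Integrable g (μ.prod (volume.restrict (Set.Icc (0 : ℝ) 1))) ∧
      (∀ᵐ q ∂(μ.prod (volume.restrict (Set.Icc (0 : ℝ) 1))),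
        (∀ θ ∈ Metric.ball θ₁ ε,
          DifferentiableAt ℝ (fun θ' => ph θ' q.1 q.2) θ ∧
          ‖fderiv ℝ (fun θ' => ph θ' q.1 q.2) θ‖ *
            |∑ a, pl θ₂ q.1 q.2 a * r (q.1, a)| ≤ g q) ∧
        ContinuousOn
          (fun θ => ph θ q.1 q.2 * ∑ a, pl θ₂ q.1 q.2 a * r (q.1, a))
          (Metric.ball θ₁ ε))) :
    HasFDerivAt
      (fun θ : E₁ => ∫ s, (∫ k in Set.Icc (0 : ℝ) 1,
        ph θ s k * ∑ a, pl θ₂ s k a * r (s, a)) ∂μ)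
      (∫ s, (∫ k in Set.Icc (0 : ℝ) 1,
        (ph θ₁ s k * ∑ a, pl θ₂ s k a * r (s, a)) •
          fderiv ℝ (fun θ => Real.log (ph θ s k)) θ₁) ∂μ)
      θ₁ := by
  classical
  obtain ⟨ε, εpos, g, hg_int, hdom⟩ := hdom
  set ν := volume.restrict (Set.Icc (0 : ℝ) 1) with hν
  set P := μ.prod ν with hP
  set rh : S × ℝ → ℝ := fun q => ∑ a, pl θ₂ q.1 q.2 a * r (q.1, a) with hrh
  set F : E₁ → S × ℝ → ℝ := fun θ q => ph θ q.1 q.2 * rh q with hF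
  set F' : E₁ → S × ℝ → (E₁ →L[ℝ] ℝ) :=
    fun θ q => rh q • fderiv ℝ (fun θ' => ph θ' q.1 q.2) θ with hF'
  -- a.e. q, the second coordinate lies in [0,1]
  have hae : ∀ᵐ q ∂P, q.2 ∈ Set.Icc (0 : ℝ) 1 := by
    rw [ae_iff]
    have hset : {q : S × ℝ | ¬ q.2 ∈ Set.Icc (0 : ℝ) 1}
        = Set.univ ×ˢ (Set.Icc (0 : ℝ) 1)ᶜ := by
      ext q; simp
    rw [hset, hP, Measure.prod_prod, hν,
      Measure.restrict_apply measurableSet_Icc.compl]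
    simp
  -- rh is a.e. strongly measurable
  have hrh_ae : (fun q : S × ℝ => F θ₁ q / ph θ₁ q.1 q.2) =ᵐ[P] rh := by
    filter_upwards [hae] with q hq
    have h0 : ph θ₁ q.1 q.2 ≠ 0 := (hph_pos θ₁ q.1 q.2 hq).ne'
    simp only [hF]
    exact mul_div_cancel_left₀ _ h0
  have hrh_meas : AEStronglyMeasurable rh P :=
    ((hint.1.aemeasurable.div (hph_meas θ₁).aemeasurable).aestronglyMeasurable).congr hrh_ae
  have hFmeas : ∀ θ, AEStronglyMeasurable (F θ) P := fun θ =>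
    (hph_meas θ).mul hrh_meas
  -- a.e. differentiability at θ₁
  have hdiff₁ : ∀ᵐ q ∂P, DifferentiableAt ℝ (fun θ' => ph θ' q.1 q.2) θ₁ :=
    hdom.mono fun q hq => (hq.1 θ₁ (Metric.mem_ball_self εpos)).1
  -- measurability of the fderiv at θ₁
  have hD_meas : AEStronglyMeasurable
      (fun q : S × ℝ => fderiv ℝ (fun θ' => ph θ' q.1 q.2) θ₁) P := by
    set b := Module.finBasis ℝ E₁ with hb
    have hd : ∀ i, AEMeasurable
        (fun q : S × ℝ => fderiv ℝ (fun θ' => ph θ' q.1 q.2) θ₁ (b i)) P := by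
      intro i
      apply aemeasurable_of_tendsto_metrizable_ae'
        (f := fun (n : ℕ) (q : S × ℝ) =>
          (n : ℝ) • (ph (θ₁ + ((n : ℝ))⁻¹ • b i) q.1 q.2 - ph θ₁ q.1 q.2))
      · intro n
        exact (((hph_meas _).sub (hph_meas θ₁)).const_smul ((n : ℝ))).aemeasurable
      · filter_upwards [hdiff₁] with q hq
        exact hq.hasFDerivAt.lim (b i)
          (by simpa using tendsto_natCast_atTop_atTop (R := ℝ))
    have key : ∀ L : E₁ →L[ℝ] ℝ,
        L = ∑ i, L (b i) • LinearMap.toContinuousLinearMap (b.coord i) := by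
      intro L
      apply ContinuousLinearMap.ext
      intro v
      conv_lhs => rw [← b.sum_repr v]
      simp [map_sum, Module.Basis.coord_apply, mul_comm]
      conv_lhs => rw [← b.sum_repr v]
      rw [map_sum]
      exact Finset.sum_congr rfl fun i _ => by rw [map_smul, smul_eq_mul, mul_comm]
    have heq : (fun q : S × ℝ => fderiv ℝ (fun θ' => ph θ' q.1 q.2) θ₁)
        = fun q => ∑ i, (fderiv ℝ (fun θ' => ph θ' q.1 q.2) θ₁ (b i)) •
            LinearMap.toContinuousLinearMap (b.coord i) :=
      funext fun q => key _
    rw [heq]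
    exact Finset.aestronglyMeasurable_fun_sum _ fun i _ =>
      ((hd i).aestronglyMeasurable).smul_const _
  have hF'_meas : AEStronglyMeasurable (F' θ₁) P := hrh_meas.smul hD_meas
  -- norm bound for F'
  have h_bound : ∀ᵐ q ∂P, ∀ θ ∈ Metric.ball θ₁ ε, ‖F' θ q‖ ≤ g q := by
    filter_upwards [hdom] with q hq θ hθ
    have h2 := (hq.1 θ hθ).2
    calc ‖F' θ q‖ = |rh q| * ‖fderiv ℝ (fun θ' => ph θ' q.1 q.2) θ‖ := by
          simp only [hF']
          rw [norm_smul (rh q) (fderiv ℝ (fun θ' => ph θ' q.1 q.2) θ), Real.norm_eq_abs]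
      _ ≤ g q := by rw [mul_comm]; exact h2
  -- differentiability of F on the ball
  have h_diff : ∀ᵐ q ∂P, ∀ θ ∈ Metric.ball θ₁ ε,
      HasFDerivAt (fun θ' => F θ' q) (F' θ q) θ := by
    filter_upwards [hdom] with q hq θ hθ
    exact ((hq.1 θ hθ).1.hasFDerivAt).mul_const (rh q)
  -- main differentiation under the integral sign (over the product measure)
  have main : HasFDerivAt (fun θ => ∫ q, F θ q ∂P) (∫ q, F' θ₁ q ∂P) θ₁ :=
    hasFDerivAt_integral_of_dominated_of_fderiv_le (Metric.ball_mem_nhds θ₁ εpos)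
      (Filter.Eventually.of_forall hFmeas) hint hF'_meas h_bound hg_int h_diff
  -- F' θ₁ is integrable
  have hF'_int : Integrable (F' θ₁) P :=
    Integrable.mono' hg_int hF'_meas
      (h_bound.mono fun q h => h θ₁ (Metric.mem_ball_self εpos))
  -- identification of the derivative integrand with the log form
  have hΦ_eq : (fun q : S × ℝ => (ph θ₁ q.1 q.2 * rh q) •
      fderiv ℝ (fun θ => Real.log (ph θ q.1 q.2)) θ₁) =ᵐ[P] F' θ₁ := by
    filter_upwards [hae, hdiff₁] with q hq hdq
    have hpos := hph_pos θ₁ q.1 q.2 hq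
    have hlog : HasFDerivAt (fun θ => Real.log (ph θ q.1 q.2))
        ((ph θ₁ q.1 q.2)⁻¹ • fderiv ℝ (fun θ' => ph θ' q.1 q.2) θ₁) θ₁ :=
      by have := (Real.hasDerivAt_log hpos.ne').comp_hasFDerivAt θ₁ hdq.hasFDerivAt; exact this
    rw [hlog.fderiv, smul_smul, hF']
    congr 1
    field_simp
  have hΦ_int : Integrable (fun q : S × ℝ => (ph θ₁ q.1 q.2 * rh q) •
      fderiv ℝ (fun θ => Real.log (ph θ q.1 q.2)) θ₁) P :=
    hF'_int.congr hΦ_eq.symm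
  have hder_eq : (∫ q, F' θ₁ q ∂P) = ∫ s, (∫ k in Set.Icc (0 : ℝ) 1,
      (ph θ₁ s k * rh (s, k)) •
        fderiv ℝ (fun θ => Real.log (ph θ s k)) θ₁) ∂μ := by
    rw [← integral_congr_ae hΦ_eq]
    exact MeasureTheory.integral_prod _ hΦ_int
  -- near θ₁, the iterated integral coincides with the product integral
  have heqF : (fun θ => ∫ q, F θ q ∂P) =ᶠ[nhds θ₁]
      (fun θ => ∫ s, (∫ k in Set.Icc (0 : ℝ) 1, F θ (s, k)) ∂μ) := by
    filter_upwards [Metric.ball_mem_nhds θ₁ εpos] with θ hθ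
    have hFi : Integrable (F θ) P := by
      have hbd : ∀ᵐ q ∂P, ‖F θ q‖ ≤ ‖F θ₁ q‖ + g q * ε := by
        filter_upwards [hdom] with q hq
        have hderivs : ∀ x ∈ Metric.ball θ₁ ε,
            HasFDerivWithinAt (fun θ' => F θ' q) (F' x q) (Metric.ball θ₁ ε) x :=
          fun x hx => (((hq.1 x hx).1.hasFDerivAt).mul_const (rh q)).hasFDerivWithinAt
        have hbound : ∀ x ∈ Metric.ball θ₁ ε, ‖F' x q‖ ≤ g q := by
          intro x hx
          have h2 := (hq.1 x hx).2
          calc ‖F' x q‖ = |rh q| * ‖fderiv ℝ (fun θ' => ph θ' q.1 q.2) x‖ := by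
                simp only [hF']
                rw [norm_smul (rh q) (fderiv ℝ (fun θ' => ph θ' q.1 q.2) x), Real.norm_eq_abs]
            _ ≤ g q := by rw [mul_comm]; exact h2
        have hg0 : 0 ≤ g q := le_trans (by positivity) ((hq.1 θ₁ (Metric.mem_ball_self εpos)).2)
        have hmv := (convex_ball θ₁ ε).norm_image_sub_le_of_norm_hasFDerivWithin_le
          hderivs hbound (Metric.mem_ball_self εpos) hθ
        have hθε : ‖θ - θ₁‖ ≤ ε := le_of_lt (by rwa [Metric.mem_ball, dist_eq_norm] at hθ)
        calc ‖F θ q‖ = ‖F θ₁ q + (F θ q - F θ₁ q)‖ := by ring_nf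
          _ ≤ ‖F θ₁ q‖ + ‖F θ q - F θ₁ q‖ := norm_add_le _ _
          _ ≤ ‖F θ₁ q‖ + g q * ε := by
              refine add_le_add (le_refl _) (hmv.trans ?_)
              exact mul_le_mul_of_nonneg_left hθε hg0
      exact Integrable.mono' (hint.norm.add (hg_int.mul_const ε)) (hFmeas θ) hbd
    exact MeasureTheory.integral_prod _ hFi
  have final := main.congr_of_eventuallyEq heqF.symm
  rw [hder_eq] at final
  simpa only [hF, hrh] using final
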